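/- arXiv:1409.5256 — 4 statements merged into one kernel-verified Lean document; each statement's English description precedes it below -/
import Mathlib

section
/- Let p > 0 and a, b > 0 be real numbers. Let X and Y be independent positive real random variables, where X has the generalized inverse Gaussian distribution with parameters (-p, a, b), i.e., density proportional to x^{-p-1} exp(-a x - b/x) on (0, ∞) with respect to Lebesgue measure, and Y has the gamma distribution with shape p and rate a, i.e., density (a^p / Γ(p)) y^{p-1} exp(-a y) on (0, ∞). Then U = (X+Y)⁻¹ and V = X⁻¹ - (X+Y)⁻¹ are independent, U has the generalized inverse Gaussian distribution with parameters (-p, b, a) (density proportional to u^{-p-1} exp(-b u - a/u) on (0, ∞)), and V has the gamma distribution with shape p and rate b. -/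
open MeasureTheory ProbabilityTheory

/-- Density (up to the constant `c`) of the generalized inverse Gaussian distribution
with parameters `(-p, a, b)` on `(0, ∞)`. -/
noncomputable def gigDensity (p a b c : ℝ) : ℝ → ENNReal := fun x =>
  ENNReal.ofReal (if 0 < x then c * x ^ (-p - 1) * Real.exp (-(a * x) - b / x) else 0)

/-- Density of the gamma distribution with shape `p` and rate `a` on `(0, ∞)`. -/
noncomputable def gammaDensity (p a : ℝ) : ℝ → ENNReal := fun y =>
  ENNReal.ofReal
    (if 0 < y then a ^ p / Real.Gamma p * y ^ (p - 1) * Real.exp (-(a * y)) else 0)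

open Set
open scoped ENNReal

/-! The map `T(x, y) = ((x + y)⁻¹, x⁻¹ - (x + y)⁻¹)` is an involution of the open positive
quadrant with `|det DT(u, v)| = (u² (u + v)²)⁻¹`. Hence `(U, V) = T(X, Y)` has density
`|det DT(u, v)| f_X(x) f_Y(y)` at `(u, v)`, where `(x, y) = T(u, v) = ((u + v)⁻¹, v / (u (u + v)))`.
The exponentials recombine since `a x + a y = a / u` and `b / x = b u + b v`, and the Jacobian
supplies exactly the missing powers, so this is the product of the `GIG(-p, b, a)` density (with
constant `c_X (a / b)^p`) and the `Gamma(p, b)` density. A product law of `(U, V)` gives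
independence and both marginals at once; the GIG factor is normalized because the gamma one is. -/

theorem map_withDensity_of_involutiveOn {E : Type*} [NormedAddCommGroup E] [NormedSpace ℝ E]
    [FiniteDimensional ℝ E] [MeasurableSpace E] [BorelSpace E] (μ : Measure E)
    [μ.IsAddHaarMeasure] {s : Set E} (hs : MeasurableSet s) {T : E → E}
    {T' : E → E →L[ℝ] E} (hTm : Measurable T) (hT' : ∀ x ∈ s, HasFDerivAt T (T' x) x)
    (hTs : MapsTo T s s) (hTT : ∀ x ∈ s, T (T x) = x) {f : E → ℝ≥0∞}
    (hf : ∀ x ∉ s, f x = 0) :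
    (μ.withDensity f).map T =
      μ.withDensity (s.indicator fun x => ENNReal.ofReal |(T' x).det| * f (T x)) := by
  have hfs : f = s.indicator f := by
    funext x; by_cases hx : x ∈ s <;> simp [hx, hf]
  have himage (A : Set E) : s ∩ T ⁻¹' A = T '' (s ∩ A) := by
    ext x
    refine ⟨fun hx => ⟨T x, ⟨hTs hx.1, hx.2⟩, hTT x hx.1⟩, ?_⟩
    rintro ⟨y, ⟨hys, hyA⟩, rfl⟩
    exact ⟨hTs hys, by rwa [mem_preimage, hTT y hys]⟩
  ext A hA
  rw [Measure.map_apply hTm hA, withDensity_apply _ (hTm hA), withDensity_apply _ hA, hfs,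
    setLIntegral_indicator hs, setLIntegral_indicator hs, ← hfs, himage,
    lintegral_image_eq_lintegral_abs_det_fderiv_mul μ (hs.inter hA)
      (fun x hx => (hT' x hx.1).hasFDerivWithinAt)
      (fun x hx y hy hxy => by rw [← hTT x hx.1, hxy, hTT y hy.1])]

noncomputable def matsumotoYorMap (z : ℝ × ℝ) : ℝ × ℝ :=
  ((z.1 + z.2)⁻¹, z.1⁻¹ - (z.1 + z.2)⁻¹)

lemma measurable_matsumotoYorMap : Measurable matsumotoYorMap := by
  unfold matsumotoYorMap; fun_prop

lemma mapsTo_matsumotoYorMap :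
    MapsTo matsumotoYorMap (Ioi 0 ×ˢ Ioi 0) (Ioi 0 ×ˢ Ioi 0) := by
  rintro ⟨x, y⟩ ⟨hx : 0 < x, hy : 0 < y⟩
  have hxy : 0 < x + y := by linarith
  exact ⟨inv_pos.2 hxy, sub_pos.2 (inv_strictAnti₀ hx (lt_add_of_pos_right x hy))⟩

lemma matsumotoYorMap_matsumotoYorMap {z : ℝ × ℝ} (hz : z ∈ Ioi 0 ×ˢ Ioi 0) :
    matsumotoYorMap (matsumotoYorMap z) = z := by
  obtain ⟨x, y⟩ := z
  obtain ⟨hx : 0 < x, hy : 0 < y⟩ := hz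
  have hxy : x + y ≠ 0 := by positivity
  simp only [matsumotoYorMap, add_sub_cancel, inv_inv, add_sub_cancel_left]

noncomputable def matsumotoYorMapFDeriv (z : ℝ × ℝ) : ℝ × ℝ →L[ℝ] ℝ × ℝ :=
  let sum := ContinuousLinearMap.fst ℝ ℝ ℝ + ContinuousLinearMap.snd ℝ ℝ ℝ
  (-((z.1 + z.2) ^ 2)⁻¹ • sum).prod
    (-(z.1 ^ 2)⁻¹ • ContinuousLinearMap.fst ℝ ℝ ℝ - -((z.1 + z.2) ^ 2)⁻¹ • sum)

lemma hasFDerivAt_matsumotoYorMap {z : ℝ × ℝ} (h1 : z.1 ≠ 0) (h12 : z.1 + z.2 ≠ 0) :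
    HasFDerivAt matsumotoYorMap (matsumotoYorMapFDeriv z) z := by
  have hfst := hasFDerivAt_fst (p := z) (𝕜 := ℝ) (F := ℝ)
  have hsum := (hasDerivAt_inv h12).comp_hasFDerivAt z (hfst.add hasFDerivAt_snd)
  replace hfst := (hasDerivAt_inv h1).comp_hasFDerivAt z hfst
  exact hsum.prodMk (hfst.sub hsum)

lemma det_matsumotoYorMapFDeriv (z : ℝ × ℝ) :
    (matsumotoYorMapFDeriv z).det = -(z.1 ^ 2 * (z.1 + z.2) ^ 2)⁻¹ := by
  rw [ContinuousLinearMap.det, ← LinearMap.det_toMatrix (Module.Basis.finTwoProd ℝ),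
    Matrix.det_fin_two]
  simp [LinearMap.toMatrix_apply, matsumotoYorMapFDeriv]
  ring

lemma matsumotoYor_rpow_identity {u v p : ℝ} (hu : 0 < u) (hv : 0 < v) :
    (u ^ 2 * (u + v) ^ 2)⁻¹ * ((u + v)⁻¹ ^ (-p - 1) * (u⁻¹ - (u + v)⁻¹) ^ (p - 1)) =
      u ^ (-p - 1) * v ^ (p - 1) := by
  have hw : 0 < u + v := by linarith
  have hdiff : u⁻¹ - (u + v)⁻¹ = v * (u * (u + v))⁻¹ := by field_simp; ring
  rw [hdiff, Real.mul_rpow hv.le (by positivity), Real.inv_rpow (x := u * (u + v)) (by positivity),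
    Real.mul_rpow hu.le hw.le, Real.inv_rpow hw.le, ← Real.rpow_neg hw.le,
    show -(-p - 1) = (p - 1) + 2 by ring, show -p - 1 = -(p - 1) - 2 by ring,
    Real.rpow_add hw, Real.rpow_sub hu (-(p - 1)), Real.rpow_neg hu.le]
  norm_cast
  field_simp

lemma matsumotoYor_exp_identity {u v a b : ℝ} (hu : 0 < u) (hv : 0 < v) :
    Real.exp (-(a * (u + v)⁻¹) - b / (u + v)⁻¹) * Real.exp (-(a * (u⁻¹ - (u + v)⁻¹))) =
      Real.exp (-(b * u) - a / u) * Real.exp (-(b * v)) := by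
  have hw : 0 < u + v := by linarith
  rw [← Real.exp_add, ← Real.exp_add]
  congr 1
  field_simp
  ring

lemma gigDensity_mul_gammaDensity_of_notMem {p a b c q r : ℝ} {z : ℝ × ℝ}
    (hz : z ∉ Ioi 0 ×ˢ Ioi 0) : gigDensity p a b c z.1 * gammaDensity q r z.2 = 0 := by
  rw [mem_prod, mem_Ioi, mem_Ioi, not_and_or] at hz
  rcases hz with h | h <;> simp [gigDensity, gammaDensity, h]

lemma abs_det_mul_density_matsumotoYorMap {p a b c : ℝ} (hp : 0 < p) (ha : 0 < a) (hb : 0 < b)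
    (hc : 0 ≤ c) {z : ℝ × ℝ} (hz : z ∈ Ioi 0 ×ˢ Ioi 0) :
    ENNReal.ofReal |(matsumotoYorMapFDeriv z).det| *
        (gigDensity p a b c (matsumotoYorMap z).1 * gammaDensity p a (matsumotoYorMap z).2) =
      gigDensity p b a (c * (a / b) ^ p) z.1 * gammaDensity p b z.2 := by
  obtain ⟨hTu, hTv⟩ := mapsTo_matsumotoYorMap hz
  obtain ⟨u, v⟩ := z
  obtain ⟨hu : 0 < u, hv : 0 < v⟩ := hz
  have hΓ := Real.Gamma_pos_of_pos hp
  simp only [matsumotoYorMap, mem_Ioi] at hTu hTv ⊢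
  simp only [gigDensity, gammaDensity, if_pos hu, if_pos hv, if_pos hTu, if_pos hTv,
    det_matsumotoYorMapFDeriv, abs_neg]
  rw [← ENNReal.ofReal_mul (by positivity), ← ENNReal.ofReal_mul (abs_nonneg _),
    ← ENNReal.ofReal_mul (by positivity)]
  congr 1
  calc _ = c * a ^ p / Real.Gamma p *
          ((u ^ 2 * (u + v) ^ 2)⁻¹ * ((u + v)⁻¹ ^ (-p - 1) * (u⁻¹ - (u + v)⁻¹) ^ (p - 1))) *
          (Real.exp (-(a * (u + v)⁻¹) - b / (u + v)⁻¹) *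
            Real.exp (-(a * (u⁻¹ - (u + v)⁻¹)))) := by
        rw [abs_of_pos (by positivity)]; ring
    _ = c * a ^ p / Real.Gamma p * (u ^ (-p - 1) * v ^ (p - 1)) *
          (Real.exp (-(b * u) - a / u) * Real.exp (-(b * v))) := by
        rw [matsumotoYor_rpow_identity hu hv, matsumotoYor_exp_identity hu hv]
    _ = _ := by
        rw [Real.div_rpow ha.le hb.le]
        field_simp

lemma map_matsumotoYorMap_withDensity {p a b c : ℝ} (hp : 0 < p) (ha : 0 < a) (hb : 0 < b)
    (hc : 0 ≤ c) :
    (volume.withDensity fun z : ℝ × ℝ => gigDensity p a b c z.1 * gammaDensity p a z.2).map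
        matsumotoYorMap =
      volume.withDensity fun z : ℝ × ℝ =>
        gigDensity p b a (c * (a / b) ^ p) z.1 * gammaDensity p b z.2 := by
  have hs : MeasurableSet (Ioi (0 : ℝ) ×ˢ Ioi (0 : ℝ)) := measurableSet_Ioi.prod measurableSet_Ioi
  rw [map_withDensity_of_involutiveOn volume hs measurable_matsumotoYorMap
    (fun z hz => hasFDerivAt_matsumotoYorMap hz.1.ne' (add_pos hz.1 hz.2).ne')
    mapsTo_matsumotoYorMap (fun z hz => matsumotoYorMap_matsumotoYorMap hz)
    (fun z hz => gigDensity_mul_gammaDensity_of_notMem hz)]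
  congr 1
  funext z
  by_cases hz : z ∈ Ioi 0 ×ˢ Ioi 0
  · rw [indicator_of_mem hz, abs_det_mul_density_matsumotoYorMap hp ha hb hc hz]
  · rw [indicator_of_notMem hz, gigDensity_mul_gammaDensity_of_notMem hz]

lemma measurable_gigDensity (p a b c : ℝ) : Measurable (gigDensity p a b c) :=
  (Measurable.ite measurableSet_Ioi (by fun_prop) measurable_const).ennreal_ofReal

lemma measurable_gammaDensity (p a : ℝ) : Measurable (gammaDensity p a) :=
  (Measurable.ite measurableSet_Ioi (by fun_prop) measurable_const).ennreal_ofReal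

lemma withDensity_gammaDensity (p a : ℝ) :
    volume.withDensity (gammaDensity p a) = gammaMeasure p a := by
  refine withDensity_congr_ae ?_
  filter_upwards [compl_mem_ae_iff.2 (Real.volume_singleton (a := 0))] with x (hx : x ≠ 0)
  rcases hx.lt_or_gt with h | h
  · simp [gammaDensity, gammaPDF, gammaPDFReal, h.not_gt, h.not_ge]
  · simp [gammaDensity, gammaPDF, gammaPDFReal, h, h.le]

theorem indepFun_and_map_eq_of_map_prod_eq_prod {Ω α β : Type*} [MeasurableSpace Ω]
    [MeasurableSpace α] [MeasurableSpace β] {P : Measure Ω} [IsProbabilityMeasure P]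
    {U : Ω → α} {V : Ω → β} (hU : Measurable U) (hV : Measurable V) {μ : Measure α}
    {ν : Measure β} [IsProbabilityMeasure ν]
    (h : P.map (fun ω => (U ω, V ω)) = μ.prod ν) :
    IndepFun U V P ∧ P.map U = μ ∧ P.map V = ν := by
  have hUV := hU.prodMk hV
  have : IsProbabilityMeasure μ := by
    have hmass : μ.prod ν univ = 1 := by
      rw [← h, Measure.map_apply hUV MeasurableSet.univ, preimage_univ, measure_univ]
    constructor
    simpa [← univ_prod_univ, Measure.prod_prod] using hmass
  have hUmap : P.map U = μ := by
    rw [show U = Prod.fst ∘ fun ω => (U ω, V ω) from rfl, ← Measure.map_map measurable_fst hUV,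
      h, Measure.map_fst_prod, measure_univ, one_smul]
  have hVmap : P.map V = ν := by
    rw [show V = Prod.snd ∘ fun ω => (U ω, V ω) from rfl, ← Measure.map_map measurable_snd hUV,
      h, Measure.map_snd_prod, measure_univ, one_smul]
  refine ⟨?_, hUmap, hVmap⟩
  rw [indepFun_iff_map_prod_eq_prod_map_map hU.aemeasurable hV.aemeasurable, h, hUmap, hVmap]

theorem matsumoto_yor_univariate_general {p a b : ℝ} (hp : 0 < p) (ha : 0 < a) (hb : 0 < b)
    {Ω : Type*} [MeasureSpace Ω] [IsProbabilityMeasure (ℙ : Measure Ω)]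
    (X Y : Ω → ℝ) (hXm : Measurable X) (hYm : Measurable Y)
    (hindep : IndepFun X Y ℙ)
    (cX : ℝ) (hcX : 0 < cX)
    (hX : Measure.map X ℙ = volume.withDensity (gigDensity p a b cX))
    (hY : Measure.map Y ℙ = volume.withDensity (gammaDensity p a)) :
    IndepFun (fun ω => (X ω + Y ω)⁻¹) (fun ω => (X ω)⁻¹ - (X ω + Y ω)⁻¹) ℙ ∧
    (∃ cU > 0, Measure.map (fun ω => (X ω + Y ω)⁻¹) ℙ =
      volume.withDensity (gigDensity p b a cU)) ∧
    Measure.map (fun ω => (X ω)⁻¹ - (X ω + Y ω)⁻¹) ℙ =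
      volume.withDensity (gammaDensity p b) := by
  have hXY : Measure.map (fun ω => (X ω, Y ω)) ℙ =
      volume.withDensity fun z : ℝ × ℝ => gigDensity p a b cX z.1 * gammaDensity p a z.2 := by
    rw [(indepFun_iff_map_prod_eq_prod_map_map hXm.aemeasurable hYm.aemeasurable).1 hindep,
      hX, hY, prod_withDensity (measurable_gigDensity ..) (measurable_gammaDensity ..),
      Measure.volume_eq_prod]
  have hUV : Measure.map (fun ω => ((X ω + Y ω)⁻¹, (X ω)⁻¹ - (X ω + Y ω)⁻¹)) ℙ =
      (volume.withDensity (gigDensity p b a (cX * (a / b) ^ p))).prod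
        (volume.withDensity (gammaDensity p b)) := by
    rw [prod_withDensity (measurable_gigDensity ..) (measurable_gammaDensity ..),
      ← Measure.volume_eq_prod, ← map_matsumotoYorMap_withDensity hp ha hb hcX.le, ← hXY,
      Measure.map_map measurable_matsumotoYorMap (hXm.prodMk hYm)]
    rfl
  have : IsProbabilityMeasure (volume.withDensity (gammaDensity p b)) := by
    rw [withDensity_gammaDensity]; exact isProbabilityMeasure_gammaMeasure hp hb
  obtain ⟨hUVindep, hU, hV⟩ :=
    indepFun_and_map_eq_of_map_prod_eq_prod (hXm.add hYm).inv (hXm.inv.sub (hXm.add hYm).inv) hUV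
  exact ⟨hUVindep, ⟨_, by positivity, hU⟩, hV⟩

/-- **The Matsumoto–Yor property** (univariate): if `X ~ GIG(-p, a, b)` and
`Y ~ Gamma(p, a)` are independent, then `U = (X+Y)⁻¹` and `V = X⁻¹ - (X+Y)⁻¹` are
independent, with `U ~ GIG(-p, b, a)` and `V ~ Gamma(p, b)`. -/
theorem matsumoto_yor_univariate {p a b : ℝ} (hp : 0 < p) (ha : 0 < a) (hb : 0 < b)
    {Ω : Type*} [MeasureSpace Ω] [IsProbabilityMeasure (ℙ : Measure Ω)]
    (X Y : Ω → ℝ) (hXm : Measurable X) (hYm : Measurable Y)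
    (hXpos : ∀ ω, 0 < X ω) (hYpos : ∀ ω, 0 < Y ω)
    (hindep : IndepFun X Y ℙ)
    (cX : ℝ) (hcX : 0 < cX)
    (hX : Measure.map X ℙ = volume.withDensity (gigDensity p a b cX))
    (hY : Measure.map Y ℙ = volume.withDensity (gammaDensity p a)) :
    IndepFun (fun ω => (X ω + Y ω)⁻¹) (fun ω => (X ω)⁻¹ - (X ω + Y ω)⁻¹) ℙ ∧
    (∃ cU > 0, Measure.map (fun ω => (X ω + Y ω)⁻¹) ℙ =
      volume.withDensity (gigDensity p b a cU)) ∧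
    Measure.map (fun ω => (X ω)⁻¹ - (X ω + Y ω)⁻¹) ℙ =
      volume.withDensity (gammaDensity p b) :=
  matsumoto_yor_univariate_general hp ha hb X Y hXm hYm hindep cX hcX hX hY
end

section
/- Let r ≥ 1 and let f₁, f₂, f₃ be continuous real-valued functions on the cone V₊ of r×r real symmetric positive definite matrices satisfying f₁(x) + f₂(y) = f₃(x^{1/2} · y · x^{1/2}) for all x, y ∈ V₊, where x^{1/2} denotes the unique symmetric positive definite square root of x. Then there exist constants q, γ₁, γ₂ ∈ ℝ such that for every x ∈ V₊: f₁(x) = q log det x + γ₁, f₂(x) = q log det x + γ₂, and f₃(x) = q log det x + γ₁ + γ₂. -/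
open Matrix

section OldSqrt

open scoped ComplexOrder

/-- The square root of a positive semidefinite matrix, as `Matrix.PosSemidef.sqrt` was defined
in the older Mathlib (removed since). -/
noncomputable def Matrix.PosSemidef.sqrt {n : Type*} [Fintype n] [DecidableEq n] {𝕜 : Type*}
    [RCLike 𝕜] {A : Matrix n n 𝕜} (hA : A.PosSemidef) : Matrix n n 𝕜 :=
  hA.1.eigenvectorUnitary.1 * diagonal ((↑) ∘ (√·) ∘ hA.1.eigenvalues) *
    (star hA.1.eigenvectorUnitary : Matrix n n 𝕜)

end OldSqrt

/-!
With `G = f₃ - f₁ 1 - f₂ 1` the equation becomes `G (x^{1/2} y x^{1/2}) = G x + G y`, so for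
positive definite `p` the congruence `z ↦ p z p` shifts `G` by the constant `G (p²)`. Shifts add up
along products, so every product `a` of positive definite matrices shifts `G` under `z ↦ a z aᵀ`. A
transvection is such a product; its shift is additive in the parameter and unchanged when a
diagonal conjugation doubles the parameter, hence zero. Gaussian elimination by transvections turns
`x` into a diagonal `D` with `G (x²) = G (D²)`, and on positive diagonal matrices `G` is a
continuous additive function of the logarithms of the entries, invariant under swapping two of them
(a quarter turn is a product of transvections), hence a multiple of `log det`; finally
`G (x²) = 2 G x`.
-/

namespace Matrix

variable {n : Type*}

theorem posDef_diagonal_mulSingle [DecidableEq n] (i : n) {a : ℝ} (ha : 0 < a) :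
    (diagonal (Pi.mulSingle i a)).PosDef :=
  PosDef.diagonal fun k ↦ by by_cases hk : k = i <;> simp [hk, ha]

section

variable [Fintype n] [DecidableEq n] {𝕜 : Type*} [RCLike 𝕜]

open scoped ComplexOrder MatrixOrder in
theorem PosSemidef.sqrt_eq_cfcSqrt {A : Matrix n n 𝕜} (hA : A.PosSemidef) :
    hA.sqrt = CFC.sqrt A := by
  rw [CFC.sqrt_eq_real_sqrt A hA.nonneg, cfcₙ_eq_cfc (hf0 := Real.sqrt_zero), hA.1.cfc_eq,
    IsHermitian.cfc, PosSemidef.sqrt]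
  simp

open scoped ComplexOrder MatrixOrder in
theorem PosSemidef.sqrt_mul_sqrt {A : Matrix n n 𝕜} (hA : A.PosSemidef) :
    hA.sqrt * hA.sqrt = A := by
  rw [hA.sqrt_eq_cfcSqrt]
  exact CFC.sqrt_mul_sqrt_self A hA.nonneg

open scoped ComplexOrder MatrixOrder in
theorem PosSemidef.sqrt_eq_of_mul_self_eq {A B : Matrix n n 𝕜} (hA : A.PosSemidef)
    (hB : B.PosSemidef) (h : B * B = A) : hA.sqrt = B := by
  rw [hA.sqrt_eq_cfcSqrt]
  exact CFC.sqrt_unique h hB.nonneg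

open scoped ComplexOrder in
theorem PosSemidef.sqrt_one (h : (1 : Matrix n n 𝕜).PosSemidef) : h.sqrt = 1 :=
  h.sqrt_eq_of_mul_self_eq .one (mul_one 1)

theorem isUnit_transvection {i j : n} (hij : i ≠ j) (c : ℝ) : IsUnit (transvection i j c) :=
  (isUnit_iff_isUnit_det _).mpr (by simp [det_transvection_of_ne i j hij])

theorem diagonal_mulSingle_mul_diagonal_mulSingle (i : n) {a b : ℝ} (hab : a * b = 1) :
    diagonal (Pi.mulSingle i a) * diagonal (Pi.mulSingle i b) = 1 := by
  rw [diagonal_mul_diagonal, ← diagonal_one]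
  congr 1
  ext k
  by_cases hk : k = i <;> simp [hk, hab]

theorem PosDef.mul_mul_transpose_same {z : Matrix n n ℝ} (hz : z.PosDef) {a : Matrix n n ℝ}
    (ha : IsUnit a) : (a * z * aᵀ).PosDef := by
  simpa [star_eq_conjTranspose, conjTranspose_eq_transpose_of_trivial] using
    (ha.posDef_star_right_conjugate_iff).mpr hz

theorem diagonal_mulSingle_mul_transvection_mul_diagonal_mulSingle {i j : n} (hij : i ≠ j)
    {a b : ℝ} (hab : a * b = 1) (c : ℝ) :
    diagonal (Pi.mulSingle i a) * transvection i j c * diagonal (Pi.mulSingle i b) =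
      transvection i j (a * c) := by
  ext k l
  simp [transvection, single_apply, one_apply, Pi.mulSingle_apply]
  grind

theorem transvection_eq_mul_mul {i j : n} (hij : i ≠ j) (c : ℝ) :
    transvection i j c = diagonal (Pi.mulSingle i 2⁻¹) *
      (transvection i j (-2 * c) * diagonal (Pi.mulSingle i 2) * (transvection i j (-2 * c))ᵀ) *
      ((transvection i j (2 * c))ᵀ * transvection i j (2 * c)) := by
  have hinv : (transvection i j (-2 * c))ᵀ * (transvection i j (2 * c))ᵀ = 1 := by
    rw [← transpose_mul, transvection_mul_transvection_same _ _ hij]; simp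
  have hscale := diagonal_mulSingle_mul_transvection_mul_diagonal_mulSingle hij
    (by norm_num : (2 : ℝ)⁻¹ * 2 = 1) (-2 * c)
  calc transvection i j c = transvection i j (-c) * transvection i j (2 * c) := by
        rw [transvection_mul_transvection_same _ _ hij]; ring_nf
    _ = _ := by
      rw [show -c = 2⁻¹ * (-2 * c) by ring, ← hscale]
      conv_lhs => rw [← Matrix.one_mul (transvection i j (2 * c)), ← hinv]
      simp only [Matrix.mul_assoc]

theorem swap_mul_diagonal_mulSingle_eq_transvection_mul {i j : n} (hij : i ≠ j) :
    swap ℝ i j * diagonal (Pi.mulSingle i (-1)) =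
      transvection i j 1 * transvection j i (-1) * transvection i j 1 := by
  simp only [transvection, add_mul, mul_add, one_mul, mul_one, single_mul_single_same,
    single_mul_single_of_ne (1 : ℝ) i j i hij.symm]
  ext a b
  simp [single_apply, one_apply, swap, Equiv.Perm.permMatrix, PEquiv.toMatrix_apply,
    Pi.mulSingle_apply, Equiv.swap_apply_def]
  grind

theorem swap_mul_diagonal_mul_swap {R : Type*} [Semiring R] (i j : n) (v : n → R) :
    swap R i j * diagonal v * swap R i j = diagonal (v ∘ Equiv.swap i j) := by
  simp [swap, Equiv.Perm.permMatrix, PEquiv.toMatrix_toPEquiv_mul, PEquiv.mul_toMatrix_toPEquiv,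
    submatrix_diagonal_equiv]

end

variable [Fintype n]

def IsCongrShift (G : Matrix n n ℝ → ℝ) (a : Matrix n n ℝ) (c : ℝ) : Prop :=
  ∀ z : Matrix n n ℝ, z.PosDef → G (a * z * aᵀ) = G z + c

theorem isCongrShift_of_posDef {G : Matrix n n ℝ → ℝ}
    (hG : ∀ p z : Matrix n n ℝ, p.PosDef → z.PosDef → G (p * z * p) = G z + G (p * p))
    {p : Matrix n n ℝ} (hp : p.PosDef) :
    IsCongrShift G p (G (p * p)) := by
  intro z hz
  rw [(isHermitian_iff_isSymm.mp hp.isHermitian).eq]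
  exact hG p z hp hz

variable [DecidableEq n]

namespace IsCongrShift

variable {G : Matrix n n ℝ → ℝ} {a b : Matrix n n ℝ} {c d : ℝ}

theorem one (G : Matrix n n ℝ → ℝ) : IsCongrShift G 1 0 := by
  intro z _
  simp

theorem mul (ha : IsCongrShift G a c) (hb : IsCongrShift G b d) (hb' : IsUnit b) :
    IsCongrShift G (a * b) (c + d) := by
  intro z hz
  rw [transpose_mul, show a * b * z * (bᵀ * aᵀ) = a * (b * z * bᵀ) * aᵀ by
    simp only [Matrix.mul_assoc], ha _ (hz.mul_mul_transpose_same hb'), hb z hz]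
  ring

theorem unique (hc : IsCongrShift G a c) (hd : IsCongrShift G a d) : c = d := by
  have := (hc 1 PosDef.one).symm.trans (hd 1 PosDef.one)
  linarith

theorem list_prod {L : List (Matrix n n ℝ)} (h : ∀ t ∈ L, IsCongrShift G t 0 ∧ IsUnit t) :
    IsCongrShift G L.prod 0 := by
  induction L with
  | nil => exact one G
  | cons t L ih =>
    simp only [List.mem_cons, forall_eq_or_imp] at h
    simpa using h.1.1.mul (ih h.2) (List.prod_isUnit fun t ht ↦ (h.2 t ht).2)

end IsCongrShift

section CongruenceEquation

variable {G : Matrix n n ℝ → ℝ}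
  (hG : ∀ p z : Matrix n n ℝ, p.PosDef → z.PosDef → G (p * z * p) = G z + G (p * p))
include hG

theorem exists_isCongrShift_transvection {i j : n} (hij : i ≠ j) (c : ℝ) :
    ∃ κ, IsCongrShift G (transvection i j c) κ := by
  have hE := posDef_diagonal_mulSingle i (by norm_num : (0 : ℝ) < 2⁻¹)
  have hP₁ := (posDef_diagonal_mulSingle i (by norm_num : (0 : ℝ) < 2)).mul_mul_transpose_same
    (isUnit_transvection hij (-2 * c))
  have hP₂ : ((transvection i j (2 * c))ᵀ * transvection i j (2 * c)).PosDef := by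
    simpa [conjTranspose_eq_transpose_of_trivial] using PosDef.conjTranspose_mul_self _
      (mulVec_injective_of_isUnit (isUnit_transvection hij (2 * c)))
  rw [transvection_eq_mul_mul hij]
  exact ⟨_, ((isCongrShift_of_posDef hG hE).mul (isCongrShift_of_posDef hG hP₁)
    hP₁.isUnit).mul (isCongrShift_of_posDef hG hP₂) hP₂.isUnit⟩

theorem isCongrShift_transvection {i j : n} (hij : i ≠ j) (c : ℝ) :
    IsCongrShift G (transvection i j c) 0 := by
  choose κ hκ using exists_isCongrShift_transvection hG hij
  have hadd : κ (c + c) = κ c + κ c := by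
    refine (hκ (c + c)).unique ?_
    rw [← transvection_mul_transvection_same _ _ hij]
    exact (hκ c).mul (hκ c) (isUnit_transvection hij c)
  have hscale : κ (2 * c) = κ c := by
    have hD := isCongrShift_of_posDef hG (posDef_diagonal_mulSingle i (by norm_num : (0 : ℝ) < 2))
    have hE :=
      isCongrShift_of_posDef hG (posDef_diagonal_mulSingle i (by norm_num : (0 : ℝ) < 2⁻¹))
    have hDE := hD.mul hE (posDef_diagonal_mulSingle i (by norm_num)).isUnit
    rw [diagonal_mulSingle_mul_diagonal_mulSingle i (by norm_num)] at hDE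
    have := (hκ (2 * c)).unique (by
      rw [← diagonal_mulSingle_mul_transvection_mul_diagonal_mulSingle hij
        (by norm_num : (2 : ℝ) * 2⁻¹ = 1)]
      exact (hD.mul (hκ c) (isUnit_transvection hij c)).mul hE
        (posDef_diagonal_mulSingle i (by norm_num)).isUnit)
    linarith [hDE.unique (IsCongrShift.one G)]
  have : κ c = 0 := by rw [two_mul] at hscale; linarith
  simpa [this] using hκ c

theorem apply_one_eq_zero : G 1 = 0 := by
  simpa using hG 1 1 PosDef.one PosDef.one

theorem isCongrShift_transvectionStruct_prod (L : List (TransvectionStruct n ℝ)) :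
    IsCongrShift G (L.map TransvectionStruct.toMatrix).prod 0 := by
  refine IsCongrShift.list_prod fun t ht ↦ ?_
  obtain ⟨⟨i, j, hij, c⟩, -, rfl⟩ := List.mem_map.mp ht
  exact ⟨isCongrShift_transvection hG hij c, isUnit_transvection hij c⟩

theorem exists_apply_mul_self_eq_apply_diagonal {x : Matrix n n ℝ} (hx : x.PosDef) :
    ∃ D : n → ℝ, G (x * x) = G (diagonal fun k ↦ D k * D k) ∧ ∏ k, D k = x.det := by
  obtain ⟨L, L', D, hLD⟩ := Pivot.exists_list_transvec_mul_mul_list_transvec_eq_diagonal x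
  have hshift := ((isCongrShift_transvectionStruct_prod hG L).mul (isCongrShift_of_posDef hG hx)
    hx.isUnit).mul (isCongrShift_transvectionStruct_prod hG L')
    ((isUnit_iff_isUnit_det _).mpr (by simp [TransvectionStruct.det_toMatrix_prod]))
  rw [hLD] at hshift
  refine ⟨D, ?_, ?_⟩
  · simpa [apply_one_eq_zero hG, diagonal_mul_diagonal] using (hshift 1 PosDef.one).symm
  · simpa [TransvectionStruct.det_toMatrix_prod] using (congrArg det hLD).symm

theorem apply_diagonal_comp_swap {i j : n} (hij : i ≠ j) {v : n → ℝ} (hv : ∀ k, 0 < v k) :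
    G (diagonal (v ∘ Equiv.swap i j)) = G (diagonal v) := by
  have hW : IsCongrShift G (swap ℝ i j * diagonal (Pi.mulSingle i (-1))) 0 := by
    rw [swap_mul_diagonal_mulSingle_eq_transvection_mul hij]
    simpa using ((isCongrShift_transvection hG hij 1).mul
      (isCongrShift_transvection hG hij.symm (-1)) (isUnit_transvection hij.symm _)).mul
      (isCongrShift_transvection hG hij 1) (isUnit_transvection hij _)
  have hsign : diagonal (Pi.mulSingle i (-1)) * diagonal v * diagonal (Pi.mulSingle i (-1)) =
      diagonal v := by
    rw [diagonal_mul_diagonal, diagonal_mul_diagonal]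
    congr 1
    ext k
    by_cases hk : k = i <;> simp [hk]
  calc G (diagonal (v ∘ Equiv.swap i j))
      = G (swap ℝ i j * diagonal (Pi.mulSingle i (-1)) * diagonal v *
          (swap ℝ i j * diagonal (Pi.mulSingle i (-1)))ᵀ) := by
        rw [transpose_mul, diagonal_transpose, transpose_swap]
        conv_lhs => rw [← swap_mul_diagonal_mul_swap, ← hsign]
        simp only [Matrix.mul_assoc]
    _ = G (diagonal v) := by simpa using hW _ (PosDef.diagonal hv)

theorem apply_diagonal_exp_add (s t : n → ℝ) :
    G (diagonal fun k ↦ Real.exp (s k + t k)) =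
      G (diagonal fun k ↦ Real.exp (s k)) + G (diagonal fun k ↦ Real.exp (t k)) := by
  have hexp (u : n → ℝ) : (diagonal fun k ↦ Real.exp (u k)).PosDef :=
    PosDef.diagonal fun _ ↦ Real.exp_pos _
  have := hG _ _ (hexp fun k ↦ s k / 2) (hexp t)
  simp only [diagonal_mul_diagonal, ← Real.exp_add, add_halves] at this
  rw [add_comm (G _), ← this]
  congr 3 with k
  congr 1
  ring

theorem exists_apply_diagonal_eq_mul_log_prod (hcont : ContinuousOn G {x | x.PosDef}) :
    ∃ q : ℝ, ∀ v : n → ℝ, (∀ k, 0 < v k) →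
      G (diagonal v) = q * Real.log (∏ k, v k) := by
  let ψ : (n → ℝ) →+ ℝ :=
    AddMonoidHom.mk' (fun s ↦ G (diagonal fun k ↦ Real.exp (s k))) (apply_diagonal_exp_add hG)
  have hψ : Continuous ψ :=
    hcont.comp_continuous (by fun_prop) fun s ↦ PosDef.diagonal fun _ ↦ Real.exp_pos _
  obtain ⟨q, hq⟩ : ∃ q, ∀ k, ψ (fun j ↦ if k = j then 1 else 0) = q := by
    rcases isEmpty_or_nonempty n with hn | ⟨⟨l⟩⟩
    · exact ⟨0, isEmptyElim⟩
    refine ⟨ψ (fun j ↦ if l = j then 1 else 0), fun k ↦ ?_⟩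
    rcases eq_or_ne k l with rfl | hkl
    · rfl
    change G _ = G _
    rw [← apply_diagonal_comp_swap hG hkl fun _ ↦ Real.exp_pos _]
    congr 2 with j
    simp only [Function.comp_apply, eq_comm (a := k), Equiv.swap_apply_eq_iff,
      Equiv.swap_apply_left, eq_comm (a := j)]
  refine ⟨q, fun v hv ↦ ?_⟩
  have := (ψ.toRealLinearMap hψ).toLinearMap.pi_apply_eq_sum_univ fun k ↦ Real.log (v k)
  simp only [ContinuousLinearMap.coe_coe, AddMonoidHom.coe_toRealLinearMap, hq, smul_eq_mul]
    at this
  rw [Real.log_prod fun k _ ↦ (hv k).ne', Finset.mul_sum]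
  simp_rw [mul_comm q, ← this]
  simp [ψ, Real.exp_log (hv _)]

end CongruenceEquation

theorem exists_eq_mul_log_det_of_apply_sqrt_mul_mul_sqrt {G : Matrix n n ℝ → ℝ}
    (hG : ∀ (x y : Matrix n n ℝ) (hx : x.PosDef), y.PosDef →
      G (hx.posSemidef.sqrt * y * hx.posSemidef.sqrt) = G x + G y)
    (hcont : ContinuousOn G {x | x.PosDef}) :
    ∃ q : ℝ, ∀ x : Matrix n n ℝ, x.PosDef → G x = q * Real.log x.det := by
  have hcongr (p z : Matrix n n ℝ) (hp : p.PosDef) (hz : z.PosDef) :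
      G (p * z * p) = G z + G (p * p) := by
    have hpp : (p * p).PosDef := by
      simpa [(isHermitian_iff_isSymm.mp hp.isHermitian).eq] using
        PosDef.one.mul_mul_transpose_same hp.isUnit
    have := hG _ z hpp hz
    rwa [hpp.posSemidef.sqrt_eq_of_mul_self_eq hp.posSemidef rfl, add_comm] at this
  obtain ⟨q, hq⟩ := exists_apply_diagonal_eq_mul_log_prod hcongr hcont
  refine ⟨q, fun x hx ↦ ?_⟩
  have hsq : G (x * x) = G x + G x := by
    have := hG x x hx hx
    have hs := hx.posSemidef.sqrt_mul_sqrt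
    generalize hx.posSemidef.sqrt = s at this hs
    rwa [show s * x * s = x * x by rw [← hs]; simp only [Matrix.mul_assoc]] at this
  obtain ⟨D, hxD, hD⟩ := exists_apply_mul_self_eq_apply_diagonal hcongr hx
  have hD0 (k : n) : D k ≠ 0 :=
    Finset.prod_ne_zero_iff.mp (hD ▸ hx.det_pos.ne') k (Finset.mem_univ k)
  rw [hq _ fun k ↦ mul_self_pos.mpr (hD0 k), Finset.prod_mul_distrib, hD,
    Real.log_mul hx.det_pos.ne' hx.det_pos.ne'] at hxD
  linarith

end Matrix

theorem log_pexider_on_posDef_cone_general {r : ℕ}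
    (f₁ f₂ f₃ : Matrix (Fin r) (Fin r) ℝ → ℝ)
    (h₃ : ContinuousOn f₃ {x : Matrix (Fin r) (Fin r) ℝ | x.PosDef})
    (heq : ∀ (x y : Matrix (Fin r) (Fin r) ℝ) (hx : x.PosDef) (_ : y.PosDef),
      f₁ x + f₂ y = f₃ (hx.posSemidef.sqrt * y * hx.posSemidef.sqrt)) :
    ∃ q γ₁ γ₂ : ℝ, ∀ x : Matrix (Fin r) (Fin r) ℝ, x.PosDef →
      f₁ x = q * Real.log x.det + γ₁ ∧
      f₂ x = q * Real.log x.det + γ₂ ∧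
      f₃ x = q * Real.log x.det + γ₁ + γ₂ := by
  have hf₁ (x : Matrix (Fin r) (Fin r) ℝ) (hx : x.PosDef) : f₃ x = f₁ x + f₂ 1 := by
    simpa [hx.posSemidef.sqrt_mul_sqrt] using (heq x 1 hx .one).symm
  have hf₂ (y : Matrix (Fin r) (Fin r) ℝ) (hy : y.PosDef) : f₃ y = f₁ 1 + f₂ y := by
    simpa [PosSemidef.sqrt_one] using (heq 1 y .one hy).symm
  obtain ⟨q, hq⟩ := exists_eq_mul_log_det_of_apply_sqrt_mul_mul_sqrt
    (G := fun x ↦ f₃ x - f₁ 1 - f₂ 1)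
    (fun x y hx hy ↦ by simp only [← heq x y hx hy, hf₁ x hx, hf₂ y hy]; ring)
    ((h₃.sub continuousOn_const).sub continuousOn_const)
  refine ⟨q, f₁ 1, f₂ 1, fun x hx ↦ ?_⟩
  have := hq x hx
  have := hf₁ x hx
  have := hf₂ x hx
  exact ⟨by linarith, by linarith, by linarith⟩

/-- **Logarithmic Pexider functional equation on the cone of positive definite matrices**:
continuous real functions `f₁, f₂, f₃` on the cone of `r × r` real symmetric positive
definite matrices satisfying `f₁(x) + f₂(y) = f₃(x^{1/2} · y · x^{1/2})` (with `x^{1/2}`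
the unique positive definite square root of `x`) have the form `q log det + const`. -/
theorem log_pexider_on_posDef_cone {r : ℕ} (hr : 1 ≤ r)
    (f₁ f₂ f₃ : Matrix (Fin r) (Fin r) ℝ → ℝ)
    (h₁ : ContinuousOn f₁ {x : Matrix (Fin r) (Fin r) ℝ | x.PosDef})
    (h₂ : ContinuousOn f₂ {x : Matrix (Fin r) (Fin r) ℝ | x.PosDef})
    (h₃ : ContinuousOn f₃ {x : Matrix (Fin r) (Fin r) ℝ | x.PosDef})
    (heq : ∀ (x y : Matrix (Fin r) (Fin r) ℝ) (hx : x.PosDef) (_ : y.PosDef),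
      f₁ x + f₂ y = f₃ (hx.posSemidef.sqrt * y * hx.posSemidef.sqrt)) :
    ∃ q γ₁ γ₂ : ℝ, ∀ x : Matrix (Fin r) (Fin r) ℝ, x.PosDef →
      f₁ x = q * Real.log x.det + γ₁ ∧
      f₂ x = q * Real.log x.det + γ₂ ∧
      f₃ x = q * Real.log x.det + γ₁ + γ₂ :=
  log_pexider_on_posDef_cone_general f₁ f₂ f₃ h₃ heq
end

section
/- Let r ≥ 1 and define Ψ on pairs of r×r real symmetric positive definite matrices by Ψ(x, y) = ((x+y)⁻¹, x⁻¹ - (x+y)⁻¹). Then: (i) for all x, y ∈ V₊ both components of Ψ(x, y) lie in V₊, so Ψ maps V₊ × V₊ into V₊ × V₊; and (ii) Ψ is an involution, i.e., Ψ(Ψ(x, y)) = (x, y) for all x, y ∈ V₊; in particular Ψ is a bijection of V₊ × V₊ onto itself with Ψ⁻¹ = Ψ. -/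
/-! For `s = x + y` one has `x⁻¹ - s⁻¹ = s⁻¹ (s x⁻¹ s - s) s⁻¹ = s⁻¹ (y x⁻¹ y + y) s⁻¹`, a congruence
of the positive definite matrix `y x⁻¹ y + y`, so both components of `Ψ(x, y)` are positive
definite. Involutivity is pure algebra: the components of `Ψ(x, y)` sum to `x⁻¹`, so
`Ψ(Ψ(x, y)) = (x, (x + y) - x)`. -/

open Matrix

/-- The Matsumoto–Yor map `Ψ(x, y) = ((x+y)⁻¹, x⁻¹ - (x+y)⁻¹)` on pairs of matrices. -/
noncomputable def MYmap {r : ℕ} (xy : Matrix (Fin r) (Fin r) ℝ × Matrix (Fin r) (Fin r) ℝ) :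
    Matrix (Fin r) (Fin r) ℝ × Matrix (Fin r) (Fin r) ℝ :=
  ((xy.1 + xy.2)⁻¹, xy.1⁻¹ - (xy.1 + xy.2)⁻¹)

namespace Matrix

variable {n : Type*} [Fintype n] [DecidableEq n]

theorem inv_sub_inv_add_eq {R : Type*} [CommRing R] {x y : Matrix n n R} (hx : IsUnit x)
    (hxy : IsUnit (x + y)) :
    x⁻¹ - (x + y)⁻¹ = (x + y)⁻¹ * (y * x⁻¹ * y + y) * (x + y)⁻¹ := by
  have hxl : x⁻¹ * x = 1 := nonsing_inv_mul x ((isUnit_iff_isUnit_det x).mp hx)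
  have hxr : x * x⁻¹ = 1 := mul_nonsing_inv x ((isUnit_iff_isUnit_det x).mp hx)
  have hsl := nonsing_inv_mul (x + y) ((isUnit_iff_isUnit_det _).mp hxy)
  have hsr := mul_nonsing_inv (x + y) ((isUnit_iff_isUnit_det _).mp hxy)
  calc x⁻¹ - (x + y)⁻¹
      = (x + y)⁻¹ * ((x + y) * x⁻¹ * (x + y) - (x + y)) * (x + y)⁻¹ := by
        simp only [Matrix.mul_sub, Matrix.sub_mul, Matrix.mul_assoc, hsr, Matrix.mul_one]
        rw [← Matrix.mul_assoc, hsl, Matrix.one_mul]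
    _ = (x + y)⁻¹ * (y * x⁻¹ * y + y) * (x + y)⁻¹ := by
        congr 2
        simp only [Matrix.mul_add, Matrix.add_mul, Matrix.mul_assoc, hxr, hxl, Matrix.one_mul,
          Matrix.mul_one]
        abel

theorem PosDef.inv_sub_inv_add {K : Type*} [Field K] [PartialOrder K] [StarRing K]
    [AddLeftMono K] {x y : Matrix n n K} (hx : x.PosDef) (hy : y.PosDef) :
    (x⁻¹ - (x + y)⁻¹).PosDef := by
  have hs := hx.add hy
  have hyxy : (y * x⁻¹ * y).PosDef := by
    simpa only [hy.isHermitian.eq] using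
      hx.inv.conjTranspose_mul_mul_same (mulVec_injective_of_isUnit hy.isUnit)
  rw [inv_sub_inv_add_eq hx.isUnit hs.isUnit]
  simpa only [hs.inv.isHermitian.eq] using
    (hyxy.add hy).conjTranspose_mul_mul_same (mulVec_injective_of_isUnit hs.inv.isUnit)

end Matrix

theorem MYmap_MYmap {r : ℕ} {x y : Matrix (Fin r) (Fin r) ℝ} (hx : IsUnit x)
    (hxy : IsUnit (x + y)) : MYmap (MYmap (x, y)) = (x, y) := by
  have hsum : (x + y)⁻¹ + (x⁻¹ - (x + y)⁻¹) = x⁻¹ := add_sub_cancel _ _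
  simp only [MYmap, hsum, nonsing_inv_nonsing_inv _ ((isUnit_iff_isUnit_det _).mp hx),
    nonsing_inv_nonsing_inv _ ((isUnit_iff_isUnit_det _).mp hxy), add_sub_cancel_left]

theorem MYmap_involutive_general {r : ℕ} :
    (∀ x y : Matrix (Fin r) (Fin r) ℝ, x.PosDef → y.PosDef →
      (MYmap (x, y)).1.PosDef ∧ (MYmap (x, y)).2.PosDef ∧
      MYmap (MYmap (x, y)) = (x, y)) ∧
    Set.BijOn (MYmap (r := r))
      {xy | xy.1.PosDef ∧ xy.2.PosDef} {xy | xy.1.PosDef ∧ xy.2.PosDef} ∧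
    Set.InvOn (MYmap (r := r)) (MYmap (r := r))
      {xy | xy.1.PosDef ∧ xy.2.PosDef} {xy | xy.1.PosDef ∧ xy.2.PosDef} := by
  have hΨ : ∀ x y : Matrix (Fin r) (Fin r) ℝ, x.PosDef → y.PosDef →
      (MYmap (x, y)).1.PosDef ∧ (MYmap (x, y)).2.PosDef ∧ MYmap (MYmap (x, y)) = (x, y) :=
    fun x y hx hy =>
      ⟨(hx.add hy).inv, hx.inv_sub_inv_add hy, MYmap_MYmap hx.isUnit (hx.add hy).isUnit⟩
  have hmaps : Set.MapsTo (MYmap (r := r)) {xy | xy.1.PosDef ∧ xy.2.PosDef}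
      {xy | xy.1.PosDef ∧ xy.2.PosDef} :=
    fun p hp => ⟨(hΨ p.1 p.2 hp.1 hp.2).1, (hΨ p.1 p.2 hp.1 hp.2).2.1⟩
  have hinv : Set.InvOn (MYmap (r := r)) (MYmap (r := r))
      {xy | xy.1.PosDef ∧ xy.2.PosDef} {xy | xy.1.PosDef ∧ xy.2.PosDef} :=
    ⟨fun p hp => (hΨ p.1 p.2 hp.1 hp.2).2.2, fun p hp => (hΨ p.1 p.2 hp.1 hp.2).2.2⟩
  exact ⟨hΨ, hinv.bijOn hmaps hmaps, hinv⟩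

/-- The map `Ψ(x, y) = ((x+y)⁻¹, x⁻¹ - (x+y)⁻¹)` maps `V₊ × V₊` into itself and is an
involution there; in particular it is a bijection of `V₊ × V₊` onto itself which is its
own inverse. -/
theorem MYmap_involutive {r : ℕ} (hr : 1 ≤ r) :
    (∀ x y : Matrix (Fin r) (Fin r) ℝ, x.PosDef → y.PosDef →
      (MYmap (x, y)).1.PosDef ∧ (MYmap (x, y)).2.PosDef ∧
      MYmap (MYmap (x, y)) = (x, y)) ∧
    Set.BijOn (MYmap (r := r))
      {xy | xy.1.PosDef ∧ xy.2.PosDef} {xy | xy.1.PosDef ∧ xy.2.PosDef} ∧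
    Set.InvOn (MYmap (r := r)) (MYmap (r := r))
      {xy | xy.1.PosDef ∧ xy.2.PosDef} {xy | xy.1.PosDef ∧ xy.2.PosDef} :=
  MYmap_involutive_general
end

section
/- Let r ≥ 1 and let x be an r×r real symmetric positive definite matrix. The linear endomorphism Q_x of the real vector space Sym_r of r×r real symmetric matrices, defined by Q_x(s) = x · s · x (ordinary matrix products), has determinant equal to (det x)^{r+1}. -/
open Matrix

noncomputable section

/-- The real vector space of symmetric `r × r` real matrices, as a submodule of the
space of all `r × r` real matrices. -/
def SymMat (r : ℕ) : Submodule ℝ (Matrix (Fin r) (Fin r) ℝ) where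
  carrier := {A | A.IsSymm}
  add_mem' := fun ha hb => ha.add hb
  zero_mem' := Matrix.isSymm_zero
  smul_mem' := fun c _ hA => hA.smul c

/-- The quadratic representation `Q_x : s ↦ x · s · x`, as a linear endomorphism of the
space of symmetric matrices (for `x` symmetric). -/
def quadRep {r : ℕ} (x : Matrix (Fin r) (Fin r) ℝ) (hx : x.IsSymm) :
    SymMat r →ₗ[ℝ] SymMat r where
  toFun s := ⟨x * (s : Matrix (Fin r) (Fin r) ℝ) * x, by
    show (x * (s : Matrix (Fin r) (Fin r) ℝ) * x)ᵀ = _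
    rw [Matrix.transpose_mul, Matrix.transpose_mul,
      show xᵀ = x from hx,
      show ((s : Matrix (Fin r) (Fin r) ℝ))ᵀ = (s : Matrix (Fin r) (Fin r) ℝ) from s.prop,
      Matrix.mul_assoc]⟩
  map_add' s t := by
    apply Subtype.ext
    simp [Matrix.mul_add, Matrix.add_mul]
  map_smul' c s := by
    apply Subtype.ext
    simp [Matrix.mul_smul, Matrix.smul_mul]

/-- A real positive definite matrix is symmetric. -/
theorem Matrix.PosDef.isSymmReal {r : ℕ} {x : Matrix (Fin r) (Fin r) ℝ}
    (hx : x.PosDef) : x.IsSymm := by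
  show xᵀ = x
  rw [← Matrix.conjTranspose_eq_transpose_of_trivial]
  exact hx.1

/-! For any matrix `a`, the congruence `s ↦ aᵀ s a` preserves `Sym_r`, and `a ↦ det (s ↦ aᵀ s a)`
is multiplicative; `Q_x` is the congruence by `x`. Writing `x = U D Uᵀ` with `U` orthogonal
reduces the claim to a diagonal `D = diag d`, which in the coordinates `(s_ij)_{i ≤ j}` acts
diagonally with eigenvalues `d_i d_j`. Each `d_i` occurs `r + 1` times in `∏_{i ≤ j} d_i d_j`. -/

open Finset

theorem card_filter_le_add_card_filter_ge {ι : Type*} [Fintype ι] [LinearOrder ι] (i : ι) :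
    #{j | i ≤ j} + #{j | j ≤ i} = Fintype.card ι + 1 := by
  have hunion : ({j | i ≤ j} : Finset ι) ∪ ({j | j ≤ i} : Finset ι) = univ := by
    ext j; simp [le_total i j]
  have hinter : ({j | i ≤ j} : Finset ι) ∩ ({j | j ≤ i} : Finset ι) = {i} := by
    ext j; simp [le_antisymm_iff, and_comm]
  rw [← card_union_add_card_inter, hunion, hinter, card_univ, card_singleton]

theorem prod_le_pairs_mul_eq_pow {ι M : Type*} [Fintype ι] [LinearOrder ι] [CommMonoid M]
    (f : ι → M) :
    ∏ p : {p : ι × ι // p.1 ≤ p.2}, f p.1.1 * f p.1.2 = (∏ i, f i) ^ (Fintype.card ι + 1) := by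
  calc ∏ p : {p : ι × ι // p.1 ≤ p.2}, f p.1.1 * f p.1.2
      = ∏ i, ∏ j, ((if i ≤ j then f i else 1) * if i ≤ j then f j else 1) := by
        rw [← prod_subtype {p : ι × ι | p.1 ≤ p.2} (by simp) (fun p => f p.1 * f p.2),
          prod_filter, Fintype.prod_prod_type]
        refine prod_congr rfl fun i _ => prod_congr rfl fun j _ => ?_
        split_ifs <;> simp
    _ = (∏ i, ∏ j, if i ≤ j then f i else 1) * ∏ i, ∏ j, if j ≤ i then f i else 1 := by
        simp_rw [prod_mul_distrib]
        exact congrArg _ prod_comm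
    _ = (∏ i, f i ^ #{j | i ≤ j}) * ∏ i, f i ^ #{j | j ≤ i} := by
        simp_rw [← prod_filter, prod_const]
    _ = (∏ i, f i) ^ (Fintype.card ι + 1) := by
        rw [← prod_mul_distrib, ← prod_pow]
        simp_rw [← pow_add, card_filter_le_add_card_filter_ge]

namespace SymMat

variable {r : ℕ}

theorem mem_iff_isSymm {A : Matrix (Fin r) (Fin r) ℝ} : A ∈ SymMat r ↔ A.IsSymm :=
  Iff.rfl

@[simps]
def upperEquiv (r : ℕ) : SymMat r ≃ₗ[ℝ] ({p : Fin r × Fin r // p.1 ≤ p.2} → ℝ) where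
  toFun A p := A.1 p.1.1 p.1.2
  map_add' _ _ := rfl
  map_smul' _ _ := rfl
  invFun c := ⟨fun a b => c ⟨(min a b, max a b), min_le_max⟩,
    IsSymm.ext fun a b => by simp only [min_comm, max_comm]⟩
  left_inv A := Subtype.ext <| funext₂ fun a b => by
    rcases le_total a b with h | h
    · simp [h]
    · simp [h, A.2.apply]
  right_inv c := funext fun p => by simp [p.2]

def congruence (a : Matrix (Fin r) (Fin r) ℝ) : SymMat r →ₗ[ℝ] SymMat r where
  toFun s := ⟨aᵀ * s * a, mem_iff_isSymm.2 <| by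
    simp [IsSymm, transpose_mul, (mem_iff_isSymm.1 s.2).eq, Matrix.mul_assoc]⟩
  map_add' s t := Subtype.ext <| by simp [Matrix.mul_add, Matrix.add_mul]
  map_smul' c s := Subtype.ext <| by simp

@[simp]
theorem coe_congruence_apply (a : Matrix (Fin r) (Fin r) ℝ) (s : SymMat r) :
    (congruence a s : Matrix (Fin r) (Fin r) ℝ) = aᵀ * s * a :=
  rfl

theorem congruence_mul (a b : Matrix (Fin r) (Fin r) ℝ) :
    congruence (a * b) = congruence b ∘ₗ congruence a :=
  LinearMap.ext fun s => Subtype.ext <| by simp [transpose_mul, Matrix.mul_assoc]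

theorem congruence_one : congruence (1 : Matrix (Fin r) (Fin r) ℝ) = LinearMap.id :=
  LinearMap.ext fun s => Subtype.ext <| by simp

theorem det_congruence_diagonal (d : Fin r → ℝ) :
    LinearMap.det (congruence (diagonal d))
      = ∏ p : {p : Fin r × Fin r // p.1 ≤ p.2}, d p.1.1 * d p.1.2 := by
  have hcoord : upperEquiv r ∘ₗ congruence (diagonal d) ∘ₗ (upperEquiv r).symm
      = toLin' (diagonal fun p : {p : Fin r × Fin r // p.1 ≤ p.2} => d p.1.1 * d p.1.2) := by
    refine LinearMap.ext fun c => funext fun p => ?_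
    simp [p.2, mulVec_diagonal]
    ring
  rw [← LinearMap.det_conj _ (upperEquiv r), hcoord, LinearMap.det_toLin', det_diagonal]

theorem det_congruence_orthogonal_conj {U : Matrix (Fin r) (Fin r) ℝ} (hU : Uᵀ * U = 1)
    (d : Fin r → ℝ) :
    LinearMap.det (congruence (U * diagonal d * Uᵀ)) = (∏ i, d i) ^ (r + 1) := by
  have hcancel : LinearMap.det (congruence U) * LinearMap.det (congruence Uᵀ) = 1 := by
    rw [← LinearMap.det_comp, ← congruence_mul, hU, congruence_one, LinearMap.det_id]
  rw [congruence_mul, congruence_mul, LinearMap.det_comp, LinearMap.det_comp,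
    det_congruence_diagonal, prod_le_pairs_mul_eq_pow, Fintype.card_fin]
  linear_combination (∏ i, d i) ^ (r + 1) * hcancel

theorem det_congruence_of_isSymm {x : Matrix (Fin r) (Fin r) ℝ} (hx : x.IsSymm) :
    LinearMap.det (congruence x) = x.det ^ (r + 1) := by
  have hH : x.IsHermitian := isHermitian_iff_isSymm.2 hx
  set U : Matrix (Fin r) (Fin r) ℝ := ↑hH.eigenvectorUnitary
  have hU : Uᵀ * U = 1 := Unitary.coe_star_mul_self hH.eigenvectorUnitary
  have hspectral : x = U * diagonal hH.eigenvalues * Uᵀ := by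
    simpa [star_eq_conjTranspose] using hH.spectral_theorem
  have hdet : x.det = ∏ i, hH.eigenvalues i := by
    simpa using hH.det_eq_prod_eigenvalues
  conv_lhs => rw [hspectral]
  rw [det_congruence_orthogonal_conj hU, hdet]

end SymMat

theorem quadRep_eq_congruence {r : ℕ} (x : Matrix (Fin r) (Fin r) ℝ) (hx : x.IsSymm) :
    quadRep x hx = SymMat.congruence x :=
  LinearMap.ext fun s => Subtype.ext <| by simp [quadRep, hx.eq]

theorem det_quadRep_general {r : ℕ} (x : Matrix (Fin r) (Fin r) ℝ)
    (hx : x.PosDef) :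
    LinearMap.det (quadRep x hx.isSymmReal) = x.det ^ (r + 1) := by
  rw [quadRep_eq_congruence]
  exact SymMat.det_congruence_of_isSymm hx.isSymmReal

/-- **Determinant of the quadratic representation**: for a symmetric positive definite
`r × r` real matrix `x`, the determinant of the linear endomorphism `Q_x : s ↦ x · s · x`
of the space of symmetric matrices equals `(det x)^(r+1)`. -/
theorem det_quadRep {r : ℕ} (hr : 1 ≤ r) (x : Matrix (Fin r) (Fin r) ℝ)
    (hx : x.PosDef) :
    LinearMap.det (quadRep x hx.isSymmReal) = x.det ^ (r + 1) :=
  det_quadRep_general x hx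

end
end
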